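/- Let E be a real inner product space, g ∈ E, ξ ∈ ℝ, and d* > 0. Define U_att : E → ℝ by U_att(p) = (1/2)·ξ·‖p − g‖² if ‖p − g‖ ≤ d*, and U_att(p) = d*·ξ·‖p − g‖ − (1/2)·ξ·(d*)² if ‖p − g‖ > d*. Then U_att is differentiable at every point of E, and its gradient at p equals ξ·(p − g) when ‖p − g‖ ≤ d* and equals (d*·ξ/‖p − g‖)·(p − g) when ‖p − g‖ > d*; in particular the two branch formulas agree on the switching surface ‖p − g‖ = d*, so the attractive force field −∇U_att is well defined and continuous there. -/

import Mathlib

/-!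
Write `r = ‖p - g‖`. Completing the square gives the Huber identity
`Uatt p = ½ξ r² - ½ξ (max (r - d*) 0)²`. Where `r ≤ d*` the correction term is bounded by
`½|ξ| ‖x - p‖²` near `p`, so it is flat at `p` and the gradient is that of `½ξ r²`, namely
`ξ (p - g)`. Where `r > d*` the potential is locally the far-field branch `d* ξ r - ½ξ d*²`, whose
gradient is `(d* ξ / r)(p - g)`. At `r = d*` both formulas give `ξ (p - g)`.
-/

open Filter Topology InnerProductSpace Asymptotics

/-- The piecewise attractive potential U_att of the APF baseline. -/
noncomputable def Uatt {E : Type*} [NormedAddCommGroup E] [InnerProductSpace ℝ E]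
    (g : E) (ξ dstar : ℝ) (p : E) : ℝ :=
  if ‖p - g‖ ≤ dstar then (1 / 2 : ℝ) * ξ * ‖p - g‖ ^ 2
  else dstar * ξ * ‖p - g‖ - (1 / 2 : ℝ) * ξ * dstar ^ 2

section Gradient

variable {E : Type*} [NormedAddCommGroup E] [InnerProductSpace ℝ E] [CompleteSpace E]
  {f f₁ : E → ℝ} {f' f₁' x : E}

theorem HasGradientAt.add (hf : HasGradientAt f f' x) (hf₁ : HasGradientAt f₁ f₁' x) :
    HasGradientAt (fun y => f y + f₁ y) (f' + f₁') x := by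
  rw [hasGradientAt_iff_hasFDerivAt, map_add]
  exact hf.hasFDerivAt.add hf₁.hasFDerivAt

theorem HasGradientAt.const_mul (c : ℝ) (hf : HasGradientAt f f' x) :
    HasGradientAt (fun y => c * f y) (c • f') x := by
  rw [hasGradientAt_iff_hasFDerivAt, map_smulₛₗ]
  exact hf.hasFDerivAt.const_mul c

theorem HasGradientAt.sub_const (c : ℝ) (hf : HasGradientAt f f' x) :
    HasGradientAt (fun y => f y - c) f' x :=
  hasGradientAt_iff_hasFDerivAt.2 (hf.hasFDerivAt.sub_const c)

theorem Asymptotics.IsBigO.hasGradientAt {n : ℕ} (h : f =O[𝓝 x] fun y => ‖y - x‖ ^ n)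
    (hn : 1 < n) : HasGradientAt f 0 x := by
  rw [hasGradientAt_iff_hasFDerivAt, map_zero]
  exact h.hasFDerivAt hn

theorem hasGradientAt_norm_sub_sq (g p : E) :
    HasGradientAt (fun y => ‖y - g‖ ^ 2) ((2 : ℝ) • (p - g)) p := by
  rw [hasGradientAt_iff_hasFDerivAt]
  refine ((hasFDerivAt_id p).sub_const g).norm_sq.congr_fderiv ?_
  ext v
  simp

theorem hasGradientAt_norm_sub {g p : E} (hp : p ≠ g) :
    HasGradientAt (fun y => ‖y - g‖) (‖p - g‖⁻¹ • (p - g)) p := by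
  have hsq : ‖p - g‖ ^ 2 ≠ 0 := by simpa [sub_eq_zero] using hp
  have h := ((hasGradientAt_norm_sub_sq g p).hasFDerivAt.sqrt hsq)
  simp only [Real.sqrt_sq (norm_nonneg _)] at h
  rw [hasGradientAt_iff_hasFDerivAt]
  refine h.congr_fderiv ?_
  rw [map_smulₛₗ, map_smulₛₗ, smul_smul]
  congr 1
  simp

end Gradient

theorem max_norm_sub_sub_le {E : Type*} [SeminormedAddCommGroup E] {g p : E} {r : ℝ}
    (hp : ‖p - g‖ ≤ r) (x : E) :
    max (‖x - g‖ - r) 0 ≤ ‖x - p‖ :=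
  max_le (by linarith [sub_sub_sub_cancel_right x p g ▸ norm_sub_norm_le (x - g) (p - g)])
    (norm_nonneg _)

section Uatt

variable {E : Type*} [NormedAddCommGroup E] [InnerProductSpace ℝ E] {g p : E} {ξ dstar : ℝ}

theorem Uatt_sub_half_mul_norm_sq (x : E) :
    Uatt g ξ dstar x - 1 / 2 * ξ * ‖x - g‖ ^ 2 = -(ξ / 2 * max (‖x - g‖ - dstar) 0 ^ 2) := by
  unfold Uatt
  split_ifs with h
  · rw [max_eq_right (by linarith)]; ring
  · rw [max_eq_left (by linarith)]; ring

theorem Uatt_eventuallyEq_of_lt (hp : dstar < ‖p - g‖) :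
    Uatt g ξ dstar =ᶠ[𝓝 p] fun x => dstar * ξ * ‖x - g‖ - 1 / 2 * ξ * dstar ^ 2 := by
  filter_upwards [(continuous_sub_right g).norm.continuousAt.eventually
    (eventually_gt_nhds hp)] with x hx
  rw [Uatt, if_neg hx.not_ge]

variable [CompleteSpace E]

theorem hasGradientAt_Uatt_of_le (hp : ‖p - g‖ ≤ dstar) :
    HasGradientAt (Uatt g ξ dstar) (ξ • (p - g)) p := by
  have hquad : HasGradientAt (fun x => 1 / 2 * ξ * ‖x - g‖ ^ 2) (ξ • (p - g)) p := by
    convert (hasGradientAt_norm_sub_sq g p).const_mul (1 / 2 * ξ) using 1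
    rw [smul_smul]; ring_nf
  have hflat : (fun x => Uatt g ξ dstar x - 1 / 2 * ξ * ‖x - g‖ ^ 2) =O[𝓝 p]
      fun x => ‖x - p‖ ^ 2 := by
    refine IsBigO.of_bound (|ξ| / 2) (Eventually.of_forall fun x => ?_)
    rw [Uatt_sub_half_mul_norm_sq, norm_neg, norm_mul, norm_pow, norm_pow, norm_norm, norm_div,
      Real.norm_two, Real.norm_eq_abs, Real.norm_of_nonneg (le_max_right _ _)]
    gcongr
    exact max_norm_sub_sub_le hp x
  simpa using hquad.add (hflat.hasGradientAt one_lt_two)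

theorem hasGradientAt_Uatt_of_lt (hd : 0 ≤ dstar) (hp : dstar < ‖p - g‖) :
    HasGradientAt (Uatt g ξ dstar) ((dstar * ξ / ‖p - g‖) • (p - g)) p := by
  have hpg : p ≠ g := sub_ne_zero.1 (norm_pos_iff.1 (hd.trans_lt hp))
  have h := ((hasGradientAt_norm_sub hpg).const_mul (dstar * ξ)).sub_const (1 / 2 * ξ * dstar ^ 2)
  rw [smul_smul, ← div_eq_mul_inv] at h
  exact h.congr_of_eventuallyEq (Uatt_eventuallyEq_of_lt hp)

end Uatt

/-- U_att is differentiable everywhere, its gradient is ξ·(p − g) in the near field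
‖p − g‖ ≤ d* and (d*·ξ/‖p − g‖)·(p − g) in the far field ‖p − g‖ > d*, and the two
branch formulas agree on the switching surface ‖p − g‖ = d*, so the attractive force
field −∇U_att is well defined and continuous there. -/
theorem hasGradientAt_Uatt
    {E : Type*} [NormedAddCommGroup E] [InnerProductSpace ℝ E] [CompleteSpace E]
    (g : E) (ξ : ℝ) (dstar : ℝ) (hd : 0 < dstar) :
    (∀ p : E, DifferentiableAt ℝ (Uatt g ξ dstar) p) ∧
    (∀ p : E, ‖p - g‖ ≤ dstar → HasGradientAt (Uatt g ξ dstar) (ξ • (p - g)) p) ∧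
    (∀ p : E, dstar < ‖p - g‖ →
      HasGradientAt (Uatt g ξ dstar) ((dstar * ξ / ‖p - g‖) • (p - g)) p) ∧
    (∀ p : E, ‖p - g‖ = dstar →
      ξ • (p - g) = (dstar * ξ / ‖p - g‖) • (p - g)) := by
  refine ⟨fun p => ?_, fun p => hasGradientAt_Uatt_of_le, fun p => hasGradientAt_Uatt_of_lt hd.le,
    fun p hp => ?_⟩
  · rcases le_or_gt ‖p - g‖ dstar with hp | hp
    · exact (hasGradientAt_Uatt_of_le hp).differentiableAt
    · exact (hasGradientAt_Uatt_of_lt hd.le hp).differentiableAt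
  · rw [hp, mul_div_cancel_left₀ ξ hd.ne']
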